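/- Let w be a word over {2,3} and factor w uniquely as w = 2^a b^{(1)} b^{(2)} ⋯ b^{(m)}, where 2^a is the (possibly empty) maximal initial run of 2's and each block b^{(t)} has the form 3 2^{r_t} (a single letter 3 followed by r_t ≥ 0 letters 2). Then the coefficient of δ_{cat₁(w)} in K_{0,1}(w) — equivalently, the number of good-shuffles realizing cat₁(w) from its own blocks — equals the product ∏_{t=1}^{m} (r_t + 1). For example, for w = (2, 3, 3, 2, 3, 2) this coefficient is 1 × 2 × 2 = 4. -/

import Mathlib

/-- Words over the alphabet `{0,1}`, encoded with `false` = `0` and `true` = `1`. -/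
abbrev Word : Type := List Bool

/-- The ℚ-vector space `A` of finitely supported functions on words over `{0,1}`. -/
abbrev A01 : Type := Word →₀ ℚ

/-- The basis element `δ_x` of `A` attached to a word `x`. -/
noncomputable def δ (x : Word) : A01 := Finsupp.single x 1

/-- Prepend the letter `a` to every word of a formal sum. -/
noncomputable def prependLetter (a : Bool) (f : A01) : A01 :=
  Finsupp.mapDomain (List.cons a) f

/-- The shuffle product of two words, as an element of `A`. -/
noncomputable def shuffle : Word → Word → A01
  | [], y => δ y
  | a :: x, [] => δ (a :: x)
  | a :: x, b :: y =>
      prependLetter a (shuffle x (b :: y)) + prependLetter b (shuffle (a :: x) y)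
  termination_by x y => x.length + y.length

/-- The half-shuffle product on basis words: `δ_{a::x} ≺ δ_y = a·(x ш y)`, `δ_[] ≺ δ_y = 0`. -/
noncomputable def halfWord : Word → Word → A01
  | [], _ => 0
  | a :: x, y => prependLetter a (shuffle x y)

/-- The half-shuffle (zinbiel) product `≺` on `A`, extended bilinearly from basis words. -/
noncomputable def half (f g : A01) : A01 :=
  f.sum fun x c => g.sum fun y d => (c * d) • halfWord x y

/-- The right-parenthesized product `K(a_1, …, a_n) = a_1 ≺ (a_2 ≺ (⋯ ≺ a_n))`,
with `K(a_n) = a_n`, and `δ_[]` (the shuffle unit) for the empty list. -/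
noncomputable def Klist : List A01 → A01
  | [] => δ []
  | [a] => a
  | a :: b :: l => half a (Klist (b :: l))

/-- The generators `z_2 = δ_{(1,0)}` and `z_3 = u·δ_{(1,0,0)} + v·δ_{(1,1,0)}`;
letters of the alphabet `{2,3}` are encoded with `false` = `2` and `true` = `3`. -/
noncomputable def zgen (u v : ℚ) : Bool → A01
  | false => δ [true, false]
  | true => u • δ [true, false, false] + v • δ [true, true, false]

/-- `K_{u,v}(w)` for a word `w` over `{2,3}` (encoded with `false` = `2`, `true` = `3`). -/
noncomputable def Kuv (u v : ℚ) (w : List Bool) : A01 :=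
  Klist (w.map (zgen u v))

/-- The block substitution `2 ↦ (1,0)`, `3 ↦ (1,0,0)`. -/
def blocks0 (c : Bool) : Word := if c then [true, false, false] else [true, false]

/-- The block substitution `2 ↦ (1,0)`, `3 ↦ (1,1,0)`. -/
def blocks1 (c : Bool) : Word := if c then [true, true, false] else [true, false]

/-- `cat₀(w)`: substitute `2 ↦ (1,0)`, `3 ↦ (1,0,0)` and concatenate. -/
def cat0 (w : List Bool) : Word := (w.map blocks0).flatten

/-- `cat₁(w)`: substitute `2 ↦ (1,0)`, `3 ↦ (1,1,0)` and concatenate. -/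
def cat1 (w : List Bool) : Word := (w.map blocks1).flatten

/-- A good-shuffle realizing the word `x` from the words `ws = (w^1, …, w^n)`:
a partition `S` of the positions of `x`, reading `x` along `S j` gives `w^j`,
and the minima of the parts are in increasing order. -/
def GoodShuffle (ws : List Word) (x : Word)
    (S : Fin ws.length → Finset (Fin x.length)) : Prop :=
  (∀ p : Fin x.length, ∃! j, p ∈ S j) ∧
  (∀ j, ((S j).sort (· ≤ ·)).map x.get = ws.get j) ∧
  (∀ j k, j < k → (S j).min < (S k).min)

/-- The weight of a word over `{2,3}`: the sum of its letters. -/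
def wt (w : List Bool) : ℕ := (w.map fun c => if c then 3 else 2).sum

/-! Every word `y` in the support of `K_{0,1}(w)` has the length of `cat₁(w)` and is lexicographically
at least `cat₁(w)` (with `0 < 1`): inserting the tail `0` or `10` of a block into such a word never
gives anything below the word with that tail put in front. Hence in `K_{0,1}(c w) = z_c ≺ K_{0,1}(w)`
the coefficient of `cat₁(c w)` only receives a contribution from `y = cat₁(w)`, with multiplicity the
number of ways of shuffling the tail into `cat₁(w)` so as to obtain `cat₁(c w)` without its first
letter. For `c = 2` this is one. For `c = 3` and `w = 2^k w'`, with `w'` empty or starting with `3`,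
the inserted `10` may become any of the first `k + 1` pairs `10` of `(10)^(k+1) cat₁(w')`. -/

-- Mathlib's lexicographic `LinearOrder` on lists, whose `≤` is not core's `List.le`.
theorem List.cons_le_cons_iff_of_linearOrder {α : Type*} [LinearOrder α] {a b : α}
    {l m : List α} : a :: l ≤ b :: m ↔ a < b ∨ a = b ∧ l ≤ m := by
  rw [le_iff_lt_or_eq, le_iff_lt_or_eq, List.cons_lt_cons_iff, List.cons_eq_cons]
  tauto

theorem List.exists_eq_true_cons_of_true_cons_le {l m : List Bool} (h : true :: l ≤ m) :
    ∃ m', m = true :: m' ∧ l ≤ m' := by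
  rcases m with _ | ⟨_ | _, m'⟩
  · simp [le_iff_lt_or_eq] at h
  · simp [List.cons_le_cons_iff_of_linearOrder, Bool.lt_iff] at h
  · exact ⟨m', rfl, by simpa [List.cons_le_cons_iff_of_linearOrder] using h⟩

theorem Finsupp.sum_mul_eq_apply_mul {α R : Type*} [Semiring R] [DecidableEq α] (f : α →₀ R)
    {g : α → R} {a : α} {c : R} (hg : ∀ y ∈ f.support, g y = if y = a then c else 0) :
    (f.sum fun y d => d * g y) = f a * c :=
  calc (f.sum fun y d => d * g y) = f.sum fun y d => (if y = a then d else 0) * c :=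
        Finsupp.sum_congr fun y hy => by rw [hg y hy]; split_ifs <;> simp
    _ = f a * c := by rw [← Finsupp.sum_mul, Finsupp.sum_ite_self_eq']

theorem δ_apply (x t : Word) : δ x t = if x = t then 1 else 0 :=
  Finsupp.single_apply

theorem prependLetter_δ (a : Bool) (x : Word) : prependLetter a (δ x) = δ (a :: x) :=
  Finsupp.mapDomain_single

theorem prependLetter_apply_cons (a b : Bool) (f : A01) (t : Word) :
    prependLetter a f (b :: t) = if a = b then f t else 0 := by
  split_ifs with h
  · subst h
    exact Finsupp.mapDomain_apply List.cons_injective f t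
  · exact Finsupp.mapDomain_of_notMem_range _ _ (by simp [h])

theorem prependLetter_apply_nil (a : Bool) (f : A01) : prependLetter a f [] = 0 :=
  Finsupp.mapDomain_of_notMem_range _ _ (by simp)

theorem shuffle_nil_left (y : Word) : shuffle [] y = δ y := by
  rw [shuffle]

theorem shuffle_nil_right (x : Word) : shuffle x [] = δ x := by
  cases x <;> rw [shuffle]

theorem shuffle_cons_cons_apply_cons (a b c : Bool) (x y t : Word) :
    shuffle (a :: x) (b :: y) (c :: t) =
      (if a = c then shuffle x (b :: y) t else 0) + (if b = c then shuffle (a :: x) y t else 0) := by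
  rw [shuffle, Finsupp.add_apply, prependLetter_apply_cons, prependLetter_apply_cons]

theorem shuffle_cons_cons_apply_nil (a b : Bool) (x y : Word) :
    shuffle (a :: x) (b :: y) [] = 0 := by
  rw [shuffle, Finsupp.add_apply, prependLetter_apply_nil, prependLetter_apply_nil, add_zero]

theorem shuffle_cons_cons_apply_cons_ne_zero {a b c : Bool} {x y t : Word}
    (h : shuffle (a :: x) (b :: y) (c :: t) ≠ 0) :
    (a = c ∧ shuffle x (b :: y) t ≠ 0) ∨ (b = c ∧ shuffle (a :: x) y t ≠ 0) := by
  contrapose! h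
  rw [shuffle_cons_cons_apply_cons]
  split_ifs <;> simp_all

theorem length_eq_of_shuffle_apply_ne_zero :
    ∀ {x y t : Word}, shuffle x y t ≠ 0 → t.length = x.length + y.length
  | [], y, t, h => by
    rw [shuffle_nil_left, δ_apply, ite_ne_right_iff] at h
    simp [← h.1]
  | a :: x, [], t, h => by
    rw [shuffle_nil_right, δ_apply, ite_ne_right_iff] at h
    simp [← h.1]
  | a :: x, b :: y, [], h => absurd (shuffle_cons_cons_apply_nil a b x y) h
  | a :: x, b :: y, c :: t, h => by
    rcases shuffle_cons_cons_apply_cons_ne_zero h with ⟨-, h'⟩ | ⟨-, h'⟩ <;>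
    · have := length_eq_of_shuffle_apply_ne_zero h'
      simp only [List.length_cons] at this ⊢
      omega
  termination_by x y => x.length + y.length

theorem false_cons_le_of_shuffle_apply_ne_zero :
    ∀ {y s : Word}, shuffle [false] y s ≠ 0 → false :: y ≤ s
  | [], s, h => by
    rw [shuffle_nil_right, δ_apply, ite_ne_right_iff] at h
    rw [← h.1]
  | b :: y, [], h => absurd (shuffle_cons_cons_apply_nil _ _ _ _) h
  | b :: y, c :: s, h => by
    rcases shuffle_cons_cons_apply_cons_ne_zero h with ⟨rfl, h'⟩ | ⟨rfl, h'⟩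
    · rw [shuffle_nil_left, δ_apply, ite_ne_right_iff] at h'
      rw [h'.1]
    · have ih := false_cons_le_of_shuffle_apply_ne_zero h'
      cases b
      · exact List.cons_le_cons false ih
      · simp [List.cons_le_cons_iff_of_linearOrder, Bool.lt_iff]

theorem shuffle_true_cons_false_cons_apply_false_cons (x y s : Word) :
    shuffle (true :: x) (false :: y) (false :: s) = shuffle (true :: x) y s := by
  simp [shuffle_cons_cons_apply_cons]

theorem shuffle_true_cons_apply_false_cons_eq_zero (x : Word) {y : Word}
    (hy : y.head? ≠ some false) (s : Word) : shuffle (true :: x) y (false :: s) = 0 := by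
  rcases y with _ | ⟨_ | _, y⟩
  · simp [shuffle_nil_right, δ_apply]
  · simp at hy
  · simp [shuffle_cons_cons_apply_cons]

theorem shuffle_false_apply_false_cons {y : Word} (hy : y.head? ≠ some false) (x : Word) :
    shuffle [false] y (false :: x) = if y = x then 1 else 0 := by
  rcases y with _ | ⟨_ | _, y⟩
  · simp [shuffle_nil_right, δ_apply]
  · simp at hy
  · simp [shuffle_cons_cons_apply_cons, shuffle_nil_left, δ_apply]

theorem half_δ_cons (a : Bool) (x : Word) (g : A01) :
    half (δ (a :: x)) g = g.sum fun y d => d • prependLetter a (shuffle x y) := by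
  rw [half, δ, Finsupp.sum_single_index (by simp)]
  simp [halfWord]

theorem half_δ_cons_apply_cons (a b : Bool) (x : Word) (g : A01) (t : Word) :
    half (δ (a :: x)) g (b :: t) =
      if a = b then g.sum fun y d => d * shuffle x y t else 0 := by
  rw [half_δ_cons, Finsupp.sum_apply]
  split_ifs with h <;> simp [prependLetter_apply_cons, h]

theorem half_δ_cons_apply_nil (a : Bool) (x : Word) (g : A01) :
    half (δ (a :: x)) g [] = 0 := by
  simp [half_δ_cons, Finsupp.sum_apply, prependLetter_apply_nil]

theorem half_δ_nil_right (f : A01) (hf : f [] = 0) : half f (δ []) = f := by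
  rw [half]
  conv_rhs => rw [← Finsupp.sum_single f]
  refine Finsupp.sum_congr fun x hx => ?_
  rcases x with _ | ⟨a, x⟩
  · exact absurd hf (Finsupp.mem_support_iff.mp hx)
  · rw [δ, Finsupp.sum_single_index (by simp), halfWord, shuffle_nil_right, prependLetter_δ,
      mul_one, δ, Finsupp.smul_single, smul_eq_mul, mul_one]

theorem Klist_cons (a : A01) (l : List A01) (ha : a [] = 0) :
    Klist (a :: l) = half a (Klist l) := by
  cases l with
  | nil => rw [Klist, Klist, half_δ_nil_right a ha]
  | cons b l => rw [Klist]

theorem zgen_apply_nil (u v : ℚ) (c : Bool) : zgen u v c [] = 0 := by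
  cases c <;> simp [zgen, δ_apply]

theorem Kuv_cons (u v : ℚ) (c : Bool) (w : List Bool) :
    Kuv u v (c :: w) = half (zgen u v c) (Kuv u v w) :=
  Klist_cons _ _ (zgen_apply_nil u v c)

theorem zgen_zero_one (c : Bool) : zgen 0 1 c = δ (true :: (blocks1 c).tail) := by
  cases c <;> simp [zgen, blocks1]

theorem Kuv_zero_one_cons_apply_true_cons (c : Bool) (w : List Bool) (t : Word) :
    Kuv 0 1 (c :: w) (true :: t) = (Kuv 0 1 w).sum fun y d => d * shuffle (blocks1 c).tail y t := by
  rw [Kuv_cons, zgen_zero_one, half_δ_cons_apply_cons, if_pos rfl]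

theorem Kuv_zero_one_cons_apply_eq_zero (c : Bool) (w : List Bool) {t : Word}
    (ht : t.head? ≠ some true) : Kuv 0 1 (c :: w) t = 0 := by
  rw [Kuv_cons, zgen_zero_one]
  rcases t with _ | ⟨b, t⟩
  · exact half_δ_cons_apply_nil _ _ _
  · rw [half_δ_cons_apply_cons, if_neg (by simpa [eq_comm] using ht)]

theorem cat1_cons (c : Bool) (w : List Bool) : cat1 (c :: w) = blocks1 c ++ cat1 w := rfl

theorem exists_eq_true_cons_of_cat1_cons_le {c : Bool} {w : List Bool} {y : Word}
    (h : cat1 (c :: w) ≤ y) : ∃ y', y = true :: y' := by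
  obtain ⟨y', hy, -⟩ := List.exists_eq_true_cons_of_true_cons_le (l := (blocks1 c).tail ++ cat1 w)
    (by cases c <;> exact h)
  exact ⟨y', hy⟩

theorem cat1_cons_le_true_false_cons_iff (c : Bool) (w : List Bool) (y : Word) :
    cat1 (c :: w) ≤ true :: false :: y ↔ c = false ∧ cat1 w ≤ y := by
  cases c <;> simp [cat1_cons, blocks1, List.cons_le_cons_iff_of_linearOrder, Bool.lt_iff]

theorem cat1_cons_false_le_of_shuffle_apply_ne_zero :
    ∀ {w : List Bool} {y s : Word}, cat1 w ≤ y → y.length = (cat1 w).length →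
      shuffle [true, false] y s ≠ 0 → cat1 (false :: w) ≤ s
  | [], y, s, _, hlen, h => by
    rw [List.eq_nil_of_length_eq_zero hlen, shuffle_nil_right, δ_apply, ite_ne_right_iff] at h
    rw [← h.1]
    rfl
  | c :: w, y, [], hle, hlen, h => by
    obtain ⟨y, rfl⟩ := exists_eq_true_cons_of_cat1_cons_le hle
    exact absurd (shuffle_cons_cons_apply_nil _ _ _ _) h
  | c :: w, y, e :: s, hle, hlen, h => by
    obtain ⟨y, rfl⟩ := exists_eq_true_cons_of_cat1_cons_le hle
    rcases shuffle_cons_cons_apply_cons_ne_zero h with ⟨rfl, h'⟩ | ⟨rfl, h'⟩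
    · exact List.cons_le_cons true
        ((List.cons_le_cons false hle).trans (false_cons_le_of_shuffle_apply_ne_zero h'))
    refine List.cons_le_cons true ?_
    rcases s with _ | ⟨_ | _, s⟩
    · exact absurd (length_eq_of_shuffle_apply_ne_zero h') (by simp; omega)
    · -- the `0` heading `s` must be taken from `y`, which forces `c = false`
      rcases y with _ | ⟨b, y⟩
      · exact absurd (shuffle_true_cons_apply_false_cons_eq_zero _ (by simp) _) h'
      cases b
      · rw [shuffle_true_cons_false_cons_apply_false_cons] at h'
        obtain ⟨rfl, hle'⟩ := (cat1_cons_le_true_false_cons_iff c w y).mp hle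
        have hlen' : y.length = (cat1 w).length := by simpa [cat1_cons, blocks1] using hlen
        exact List.cons_le_cons false
          (cat1_cons_false_le_of_shuffle_apply_ne_zero hle' hlen' h')
      · exact absurd (shuffle_true_cons_apply_false_cons_eq_zero _ (by simp) _) h'
    · simp [List.cons_le_cons_iff_of_linearOrder, Bool.lt_iff]

theorem length_eq_and_cat1_le_of_Kuv_apply_ne_zero :
    ∀ {w : List Bool} {y : Word}, Kuv 0 1 w y ≠ 0 →
      y.length = (cat1 w).length ∧ cat1 w ≤ y
  | [], y, h => by
    rw [Kuv, List.map_nil, Klist, δ_apply, ite_ne_right_iff] at h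
    rw [← h.1]
    exact ⟨rfl, le_rfl⟩
  | c :: w, [], h => absurd (Kuv_zero_one_cons_apply_eq_zero c w (by simp)) h
  | c :: w, false :: s, h => absurd (Kuv_zero_one_cons_apply_eq_zero c w (by simp)) h
  | c :: w, true :: s, h => by
    rw [Kuv_zero_one_cons_apply_true_cons, Finsupp.sum] at h
    obtain ⟨y, -, hy⟩ := Finset.exists_ne_zero_of_sum_ne_zero h
    have hsh := right_ne_zero_of_mul hy
    obtain ⟨hlen, hle⟩ := length_eq_and_cat1_le_of_Kuv_apply_ne_zero (left_ne_zero_of_mul hy)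
    have hlen' := length_eq_of_shuffle_apply_ne_zero hsh
    refine ⟨?_, ?_⟩
    · cases c <;> simp [cat1_cons, blocks1] at hlen' ⊢ <;> omega
    · cases c
      · exact List.cons_le_cons true
          ((List.cons_le_cons false hle).trans (false_cons_le_of_shuffle_apply_ne_zero hsh))
      · exact List.cons_le_cons true (cat1_cons_false_le_of_shuffle_apply_ne_zero hle hlen hsh)

def leadingTwos : List Bool → ℕ
  | false :: w => leadingTwos w + 1
  | _ => 0

theorem leadingTwos_replicate_append (r : ℕ) {w : List Bool} (hw : w.head? ≠ some false) :
    leadingTwos (List.replicate r false ++ w) = r := by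
  induction r with
  | zero => rcases w with _ | ⟨_ | _, w⟩ <;> simp_all [leadingTwos]
  | succ r ih => rw [List.replicate_succ, List.cons_append, leadingTwos, ih]

theorem shuffle_true_false_apply_cat1_cons_false :
    ∀ {w : List Bool} {y : Word}, cat1 w ≤ y → y.length = (cat1 w).length →
      shuffle [true, false] y (cat1 (false :: w)) =
        if y = cat1 w then (leadingTwos w + 1 : ℚ) else 0
  | [], y, _, hlen => by
    rw [List.eq_nil_of_length_eq_zero hlen]
    simp [shuffle_nil_right, δ_apply, cat1, blocks1, leadingTwos]
  | c :: w, y, hle, hlen => by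
    obtain ⟨y, rfl⟩ := exists_eq_true_cons_of_cat1_cons_le hle
    change shuffle [true, false] (true :: y) (true :: false :: cat1 (c :: w)) = _
    rw [shuffle_cons_cons_apply_cons, if_pos rfl, if_pos rfl,
      shuffle_false_apply_false_cons (by simp)]
    rcases y with _ | ⟨_ | _, y⟩
    · rw [shuffle_true_cons_apply_false_cons_eq_zero _ (by simp)]
      cases c <;> simp [cat1_cons, blocks1]
    · obtain ⟨rfl, hle'⟩ := (cat1_cons_le_true_false_cons_iff c w y).mp hle
      have hlen' : y.length = (cat1 w).length := by simpa [cat1_cons, blocks1] using hlen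
      rw [shuffle_true_cons_false_cons_apply_false_cons,
        shuffle_true_false_apply_cat1_cons_false hle' hlen']
      have hcat : true :: false :: y = cat1 (false :: w) ↔ y = cat1 w := by
        simp [cat1_cons, blocks1]
      simp only [hcat, leadingTwos]
      split_ifs
      · push_cast
        ring
      · simp
    · rw [shuffle_true_cons_apply_false_cons_eq_zero _ (by simp)]
      cases c <;> simp [cat1_cons, blocks1, leadingTwos]

noncomputable def diagCoeff (w : List Bool) : ℚ := Kuv 0 1 w (cat1 w)

theorem diagCoeff_nil : diagCoeff [] = 1 := by
  simp [diagCoeff, Kuv, Klist, cat1, δ_apply]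

theorem diagCoeff_cons_false (w : List Bool) : diagCoeff (false :: w) = diagCoeff w := by
  rw [diagCoeff, diagCoeff, show cat1 (false :: w) = true :: false :: cat1 w from rfl,
    Kuv_zero_one_cons_apply_true_cons, ← mul_one (Kuv 0 1 w (cat1 w))]
  refine Finsupp.sum_mul_eq_apply_mul _ fun y hy => ?_
  obtain ⟨hlen, hle⟩ := length_eq_and_cat1_le_of_Kuv_apply_ne_zero (Finsupp.mem_support_iff.mp hy)
  refine shuffle_false_apply_false_cons ?_ _
  rcases w with _ | ⟨c, w⟩
  · simp [List.eq_nil_of_length_eq_zero hlen]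
  · obtain ⟨y, rfl⟩ := exists_eq_true_cons_of_cat1_cons_le hle
    simp

theorem diagCoeff_cons_true (w : List Bool) :
    diagCoeff (true :: w) = diagCoeff w * (leadingTwos w + 1) := by
  rw [diagCoeff, diagCoeff, show cat1 (true :: w) = true :: cat1 (false :: w) from rfl,
    Kuv_zero_one_cons_apply_true_cons]
  refine Finsupp.sum_mul_eq_apply_mul _ fun y hy => ?_
  obtain ⟨hlen, hle⟩ := length_eq_and_cat1_le_of_Kuv_apply_ne_zero (Finsupp.mem_support_iff.mp hy)
  exact shuffle_true_false_apply_cat1_cons_false hle hlen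

theorem diagCoeff_replicate_false_append (a : ℕ) (w : List Bool) :
    diagCoeff (List.replicate a false ++ w) = diagCoeff w := by
  induction a with
  | zero => rfl
  | succ a ih => rw [List.replicate_succ, List.cons_append, diagCoeff_cons_false, ih]

theorem diagCoeff_flatten_true_cons_replicate (rs : List ℕ) :
    diagCoeff (rs.map fun r => true :: List.replicate r false).flatten =
      (rs.map fun r => (r : ℚ) + 1).prod := by
  induction rs with
  | nil => exact diagCoeff_nil
  | cons r rs ih =>
    have hhead : ((rs.map fun r => true :: List.replicate r false).flatten).head? ≠ some false := by
      cases rs <;> simp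
    rw [List.map_cons, List.flatten_cons, List.cons_append, diagCoeff_cons_true,
      diagCoeff_replicate_false_append, ih, leadingTwos_replicate_append r hhead]
    simp [mul_comm]

theorem diagCoeff_replicate_append_flatten (a : ℕ) (rs : List ℕ) :
    diagCoeff (List.replicate a false ++ (rs.map fun r => true :: List.replicate r false).flatten)
      = (rs.map fun r => (r : ℚ) + 1).prod := by
  rw [diagCoeff_replicate_false_append, diagCoeff_flatten_true_cons_replicate]

/-- Diagonal coefficients for `(u,v) = (0,1)`: if a word `w` over `{2,3}` (encoded
`false` = `2`, `true` = `3`) factors as `2^a 3 2^{r_1} 3 2^{r_2} ⋯ 3 2^{r_m}`, then the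
coefficient of `δ_{cat₁(w)}` in `K_{0,1}(w)` equals `∏_t (r_t + 1)`; for example, for
`w = (2,3,3,2,3,2)` this coefficient is `1 × 2 × 2 = 4`. -/
theorem K01_diagonal_coefficient (w : List Bool) (a : ℕ) (rs : List ℕ)
    (hw : w = List.replicate a false ++
        (rs.map fun r => true :: List.replicate r false).flatten) :
    (Kuv 0 1 w) (cat1 w) = (rs.map fun r => (r : ℚ) + 1).prod ∧
    (Kuv 0 1 [false, true, true, false, true, false])
        (cat1 [false, true, true, false, true, false]) = 4 := by
  refine ⟨hw ▸ diagCoeff_replicate_append_flatten a rs, ?_⟩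
  rw [← diagCoeff, show [false, true, true, false, true, false] = List.replicate 1 false ++
    ([0, 1, 1].map fun r => true :: List.replicate r false).flatten from rfl,
    diagCoeff_replicate_append_flatten]
  norm_num
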